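/- For every enumeration e : Fin n ≃ V of the vertices of a finite simple graph G, the set vis(e) = { e(i) | there exists j with (i : ℕ) + 1 < (j : ℕ) and e(i) adjacent to e(j) } is a visible set of G; that is, the subgraph of G induced on V \ vis(e) is a union of paths. -/

import Mathlib

/-!
Two adjacent vertices outside `vis(e)` sit at consecutive positions of the enumeration, so `e⁻¹`
is an injective graph homomorphism from the induced graph into the path graph on `Fin n`. Being
a union of paths passes back along injective homomorphisms into a finite graph, and the path
graph, as the Hasse diagram of a linear order, is a union of paths.
-/

/-- A simple graph is a *union of paths* if it is acyclic and every vertex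
has degree at most 2. -/
def IsUnionOfPaths {V : Type*} (G : SimpleGraph V) : Prop :=
  G.IsAcyclic ∧ ∀ v : V, (G.neighborSet v).ncard ≤ 2

namespace SimpleGraph

section hasse

variable {α : Type*} [LinearOrder α]

lemma isAcyclic_hasse : (hasse α).IsAcyclic := by
  refine isAcyclic_iff_forall_adj_isBridge.mpr ?_
  suffices h : ∀ {a b : α}, a ⋖ b → (hasse α).IsBridge s(a, b) by
    rintro a b (hab | hba)
    · exact h hab
    · rw [Sym2.eq_swap]; exact h hba
  intro a b hab
  rintro ⟨p⟩
  -- a walk from `a` to `b` must leave `Set.Iic a`, and only the edge `s(a, b)` does so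
  obtain ⟨⟨⟨x, y⟩, hxy⟩, -, hx, hy⟩ := p.exists_boundary_dart (Set.Iic a) le_rfl hab.lt.not_ge
  simp only [Set.mem_Iic, not_le] at hx hy
  obtain ⟨hxy, hne⟩ := deleteEdges_adj.mp hxy
  rcases hasse_adj.mp hxy with hcov | hcov
  · obtain rfl : x = a := hx.antisymm (not_lt.mp fun h => hcov.2 h hy)
    exact hne (by rw [hcov.unique_right hab]; rfl)
  · exact (hcov.lt.trans_le hx).not_gt hy

lemma ncard_neighborSet_hasse_le_two (a : α) : ((hasse α).neighborSet a).ncard ≤ 2 := by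
  have hsucc : {b | a ⋖ b}.Subsingleton := fun _ hb _ hc => hb.unique_right hc
  have hpred : {b | b ⋖ a}.Subsingleton := fun _ hb _ hc => hb.unique_left hc
  calc ((hasse α).neighborSet a).ncard = ({b | a ⋖ b} ∪ {b | b ⋖ a}).ncard := rfl
    _ ≤ {b | a ⋖ b}.ncard + {b | b ⋖ a}.ncard := Set.ncard_union_le _ _
    _ ≤ 1 + 1 := add_le_add ((Set.ncard_le_one hsucc.finite).mpr hsucc)
        ((Set.ncard_le_one hpred.finite).mpr hpred)

lemma isUnionOfPaths_hasse : IsUnionOfPaths (hasse α) :=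
  ⟨isAcyclic_hasse, ncard_neighborSet_hasse_le_two⟩

end hasse

lemma isUnionOfPaths_pathGraph (n : ℕ) : IsUnionOfPaths (pathGraph n) :=
  isUnionOfPaths_hasse

end SimpleGraph

open SimpleGraph

lemma IsUnionOfPaths.comap {V W : Type*} [Finite W] {G : SimpleGraph V} {H : SimpleGraph W}
    (f : G →g H) (hf : Function.Injective f) (hH : IsUnionOfPaths H) : IsUnionOfPaths G :=
  ⟨hH.1.comap f hf, fun v =>
    (Set.ncard_le_ncard_of_injOn f (fun _ => f.map_adj) hf.injOn).trans (hH.2 (f v))⟩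

def vis {V : Type*} (G : SimpleGraph V) {n : ℕ} (e : Fin n ≃ V) : Set V :=
  {v : V | ∃ i j : Fin n, v = e i ∧ (i : ℕ) + 1 < (j : ℕ) ∧ G.Adj (e i) (e j)}

lemma not_add_one_lt_of_notMem_vis {V : Type*} {G : SimpleGraph V} {n : ℕ} {e : Fin n ≃ V}
    {a b : V} (ha : a ∉ vis G e) (hab : G.Adj a b) : ¬(e.symm a : ℕ) + 1 < e.symm b :=
  fun h => ha ⟨e.symm a, e.symm b, by simp, h, by simpa using hab⟩

def visComplHom {V : Type*} (G : SimpleGraph V) {n : ℕ} (e : Fin n ≃ V) :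
    G.induce (vis G e)ᶜ →g pathGraph n where
  toFun v := e.symm v
  map_rel' {a b} hab := by
    have hab : G.Adj a b := hab
    have hne : (e.symm a : ℕ) ≠ e.symm b := fun h => hab.ne (by simpa using Fin.val_injective h)
    have := not_add_one_lt_of_notMem_vis a.2 hab
    have := not_add_one_lt_of_notMem_vis b.2 hab.symm
    rw [pathGraph_adj]
    omega

theorem vis_isVisibleSet_general {V : Type*} (G : SimpleGraph V)
    (n : ℕ) (e : Fin n ≃ V) :
    IsUnionOfPaths (G.induce
      ({v : V | ∃ i j : Fin n, v = e i ∧ (i : ℕ) + 1 < (j : ℕ) ∧ G.Adj (e i) (e j)}ᶜ)) :=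
  (isUnionOfPaths_pathGraph n).comap (visComplHom G e)
    (e.symm.injective.comp Subtype.val_injective)

/-- For every enumeration `e` of the vertices, the set `vis(e)` of vertices
`e i` that are adjacent to some `e j` with `i + 1 < j` is a visible set:
the induced subgraph on its complement is a union of paths. -/
theorem vis_isVisibleSet {V : Type*} [Fintype V] (G : SimpleGraph V)
    (n : ℕ) (hn : Fintype.card V = n) (e : Fin n ≃ V) :
    IsUnionOfPaths (G.induce
      ({v : V | ∃ i j : Fin n, v = e i ∧ (i : ℕ) + 1 < (j : ℕ) ∧ G.Adj (e i) (e j)}ᶜ)) :=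
  vis_isVisibleSet_general G n e
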